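/- arXiv:1208.1492 — 4 statements merged into one kernel-verified Lean document; each statement's English description precedes it below -/
import Mathlib

section
/- Let (W,S) be a Coxeter system with finite standard parabolic subgroup W_J having longest element w_J, and let x' ∈ W_J with set of reflections T_J = {w r w⁻¹ : r ∈ J, w ∈ W_J}. Then the number of elements z ∈ W_J such that z = x't for some t ∈ T_J and x' < z in Bruhat order equals ℓ(w_J) - ℓ(x'). -/
namespace CoxSE
open CoxeterSystem List

noncomputable section
set_option linter.unusedSectionVars false

variable {B W : Type*} [Group W] [DecidableEq W] {M : CoxeterMatrix B} (cs : CoxeterSystem M W)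

local prefix:100 "s" => cs.simple
local prefix:100 "π" => cs.wordProd
local prefix:100 "ℓ" => cs.length
local prefix:100 "ris" => cs.rightInvSeq

lemma zmod2_add_self (x : ZMod 2) : x + x = 0 := by revert x; decide

lemma sigma_aux (i : B) (t : W) : s i * (s i * t * s i) * s i = t := by
  calc s i * (s i * t * s i) * s i = (s i * s i) * t * (s i * s i) := by group
  _ = t := by rw [cs.simple_mul_simple_self]; group

lemma sigma_aux2 (i : B) (t : W) : (s i * t * s i = s i) ↔ (t = s i) := by
  constructor
  · intro h
    have := congrArg (fun x => s i * x * s i) h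
    rw [sigma_aux] at this
    rw [this]
    calc s i * s i * s i = (s i * s i) * s i := by group
    _ = s i := by rw [cs.simple_mul_simple_self]; group
  · rintro rfl
    rw [cs.simple_mul_simple_self, one_mul]

/-- The sign permutation associated to a simple reflection. -/
def sigma (i : B) : Equiv.Perm (W × ZMod 2) where
  toFun p := (s i * p.1 * s i, p.2 + if p.1 = s i then 1 else 0)
  invFun p := (s i * p.1 * s i, p.2 + if p.1 = s i then 1 else 0)
  left_inv := by
    rintro ⟨t, ε⟩
    simp only [sigma_aux, sigma_aux2]
    refine Prod.ext rfl ?_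
    simp only [add_assoc]
    by_cases h : t = s i <;> simp [h, zmod2_add_self]
  right_inv := by
    rintro ⟨t, ε⟩
    simp only [sigma_aux, sigma_aux2]
    refine Prod.ext rfl ?_
    simp only [add_assoc]
    by_cases h : t = s i <;> simp [h, zmod2_add_self]

lemma sigma_apply (i : B) (t : W) (ε : ZMod 2) :
    sigma cs i (t, ε) = (s i * t * s i, ε + if t = s i then 1 else 0) := rfl

lemma ris_cons (i : B) (ω : List B) :
    ris (i :: ω) = ((π ω)⁻¹ * (s i) * (π ω)) :: ris ω := rfl

lemma prod_map_sigma_apply (ω : List B) (t : W) (ε : ZMod 2) :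
    ((ω.map (sigma cs)).prod) (t, ε)
      = (π ω * t * (π ω)⁻¹, ε + ((ris ω).count t : ZMod 2)) := by
  induction ω generalizing ε with
  | nil => simp
  | cons i ω ih =>
    rw [List.map_cons, List.prod_cons, Equiv.Perm.mul_apply, ih, sigma_apply,
      cs.wordProd_cons, ris_cons]
    refine Prod.ext ?_ ?_
    · simp only [mul_inv_rev, cs.inv_simple]
      group
    · simp only [List.count_cons]
      have hiff : (π ω * t * (π ω)⁻¹ = s i) ↔ ((π ω)⁻¹ * s i * π ω = t) := by
        constructor
        · intro h; rw [← h]; group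
        · intro h; rw [← h]; group
      by_cases h : π ω * t * (π ω)⁻¹ = s i
      · have h' := hiff.mp h
        simp only [h, if_pos, h', beq_self_eq_true, if_true]
        push_cast
        ring
      · have h' : ¬ ((π ω)⁻¹ * s i * π ω = t) := fun hh => h (hiff.mpr hh)
        rw [if_neg h]
        have : ((π ω)⁻¹ * s i * π ω == t) = false := by
          simp [h']
        rw [this]
        simp


lemma ris_append (ω₁ ω₂ : List B) :
    ris (ω₁ ++ ω₂) = (ris ω₁).map (fun t => (π ω₂)⁻¹ * t * π ω₂) ++ ris ω₂ := by
  induction ω₁ with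
  | nil => simp [rightInvSeq]
  | cons i ω₁ ih =>
    have h1 : ris ((i :: ω₁) ++ ω₂)
        = ((π (ω₁ ++ ω₂))⁻¹ * (s i) * (π (ω₁ ++ ω₂))) :: ris (ω₁ ++ ω₂) := rfl
    have h2 : ris (i :: ω₁) = ((π ω₁)⁻¹ * (s i) * (π ω₁)) :: ris ω₁ := rfl
    rw [h1, ih, h2, List.map_cons]
    simp only [cs.wordProd_append, List.cons_append, mul_inv_rev]
    congr 1
    group

/-- The right inversion sequence of an alternating word, explicitly. -/
lemma ris_alternatingWord (i i' : B) (m : ℕ) :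
    ris (alternatingWord i i' m)
      = (List.range m).map (fun k =>
          (π (alternatingWord i i' (m - 1 - k)))⁻¹ * π (alternatingWord i i' (m - k))) := by
  induction m generalizing i i' with
  | zero => simp [alternatingWord]
  | succ m ih =>
    rw [alternatingWord_succ, List.concat_eq_append, ris_append, ih]
    rw [List.range_succ, List.map_append, List.map_map]
    congr 1
    · apply List.map_congr_left
      intro k hk
      rw [List.mem_range] at hk
      simp only [Function.comp_apply, cs.wordProd_singleton]
      obtain ⟨n, hn⟩ : ∃ n, m - 1 - k = n := ⟨_, rfl⟩
      rw [hn, show m - k = n + 1 by omega, show m + 1 - 1 - k = n + 1 by omega,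
        show m + 1 - k = n + 2 by omega,
        show alternatingWord i i' (n + 1) = (alternatingWord i' i n).concat i' from
          alternatingWord_succ i i' n,
        show alternatingWord i i' (n + 2) = (alternatingWord i' i (n+1)).concat i' from
          alternatingWord_succ i i' (n+1),
        cs.wordProd_concat, cs.wordProd_concat]
      simp only [mul_inv_rev]
      group
    · simp only [List.map_singleton]
      have : m + 1 - 1 - m = 0 := by omega
      rw [this]
      have : m + 1 - m = 1 := by omega
      rw [this]
      have h1 : alternatingWord i i' 1 = [i'] := by
        rw [alternatingWord_succ]
        simp [alternatingWord]
      rw [h1]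
      simp [rightInvSeq, alternatingWord]


lemma conj_simple_pow (i i' : B) (r : ℕ) :
    s i' * (s i * s i') ^ r * s i' = ((s i * s i') ^ r)⁻¹ := by
  have h : s i' * (s i * s i') * (s i')⁻¹ = ((s i * s i'))⁻¹ := by
    rw [cs.inv_simple, mul_inv_rev, cs.inv_simple, cs.inv_simple]
    calc s i' * (s i * s i') * s i' = s i' * s i * (s i' * s i') := by group
    _ = s i' * s i := by rw [cs.simple_mul_simple_self]; group
  calc s i' * (s i * s i') ^ r * s i' = s i' * (s i * s i') ^ r * (s i')⁻¹ := by
        rw [cs.inv_simple]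
  _ = (s i' * (s i * s i') * (s i')⁻¹) ^ r := by rw [conj_pow]
  _ = ((s i * s i')⁻¹) ^ r := by rw [h]
  _ = ((s i * s i') ^ r)⁻¹ := by rw [inv_pow]

lemma prod_alt_add (i i' : B) (n : ℕ) :
    π (alternatingWord i i' (n + M i i'))
      = π (alternatingWord i i' (M i i')) * π (alternatingWord i i' n) := by
  have key1 : (s i * s i') ^ (M i i') = 1 := cs.simple_mul_simple_pow i i'
  rcases Nat.even_or_odd (M i i') with ⟨r, hr⟩ | ⟨r, hr⟩ <;>
    rcases Nat.even_or_odd n with ⟨r', hr'⟩ | ⟨r', hr'⟩ <;>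
      simp only [hr, hr', prod_alternatingWord_eq_mul_pow]
  · -- both even
    have e1 : Even (r + r) := ⟨r, rfl⟩
    have e2 : Even (r' + r') := ⟨r', rfl⟩
    have e3 : Even (r' + r' + (r + r)) := ⟨r' + r, by omega⟩
    rw [if_pos e1, if_pos e2, if_pos e3]
    rw [show (r' + r' + (r + r)) / 2 = r' + r by omega,
      show (r + r) / 2 = r by omega, show (r' + r') / 2 = r' by omega]
    rw [one_mul, one_mul, one_mul, ← pow_add, add_comm]
  · -- M even, n odd
    have hqr : ((s i * s i') ^ r)⁻¹ = (s i * s i') ^ r := by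
      apply inv_eq_of_mul_eq_one_right
      rw [← pow_add, show r + r = M i i' by omega, key1]
    have hcomm : (s i * s i') ^ r * s i' = s i' * (s i * s i') ^ r := by
      calc (s i * s i') ^ r * s i' = (s i' * s i') * (s i * s i') ^ r * s i' := by
            rw [cs.simple_mul_simple_self]; group
      _ = s i' * (s i' * (s i * s i') ^ r * s i') := by group
      _ = s i' * ((s i * s i') ^ r)⁻¹ := by rw [conj_simple_pow]
      _ = s i' * (s i * s i') ^ r := by rw [hqr]
    have e1 : Even (r + r) := ⟨r, rfl⟩
    have e2 : ¬ Even (2 * r' + 1) := Nat.not_even_iff_odd.mpr ⟨r', rfl⟩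
    have e3 : ¬ Even (2 * r' + 1 + (r + r)) := Nat.not_even_iff_odd.mpr ⟨r' + r, by omega⟩
    rw [if_pos e1, if_neg e2, if_neg e3]
    rw [show (2 * r' + 1 + (r + r)) / 2 = r' + r by omega,
      show (r + r) / 2 = r by omega, show (2 * r' + 1) / 2 = r' by omega]
    rw [one_mul, ← mul_assoc, hcomm]
    rw [mul_assoc, ← pow_add, add_comm r r']
  · -- M odd, n even
    have e1 : ¬ Even (2 * r + 1) := Nat.not_even_iff_odd.mpr ⟨r, rfl⟩
    have e2 : Even (r' + r') := ⟨r', rfl⟩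
    have e3 : ¬ Even (r' + r' + (2 * r + 1)) := Nat.not_even_iff_odd.mpr ⟨r' + r, by omega⟩
    rw [if_neg e1, if_pos e2, if_neg e3]
    rw [show (r' + r' + (2 * r + 1)) / 2 = r' + r by omega,
      show (2 * r + 1) / 2 = r by omega, show (r' + r') / 2 = r' by omega]
    rw [one_mul, mul_assoc, ← pow_add, add_comm r r']
  · -- both odd
    have hqr : ((s i * s i') ^ r)⁻¹ = (s i * s i') ^ (r + 1) := by
      apply inv_eq_of_mul_eq_one_right
      rw [← pow_add, show r + (r + 1) = M i i' by omega, key1]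
    have e1 : ¬ Even (2 * r + 1) := Nat.not_even_iff_odd.mpr ⟨r, rfl⟩
    have e2 : ¬ Even (2 * r' + 1) := Nat.not_even_iff_odd.mpr ⟨r', rfl⟩
    have e3 : Even (2 * r' + 1 + (2 * r + 1)) := ⟨r' + r + 1, by omega⟩
    rw [if_neg e1, if_neg e2, if_pos e3]
    rw [show (2 * r' + 1 + (2 * r + 1)) / 2 = r' + r + 1 by omega,
      show (2 * r + 1) / 2 = r by omega, show (2 * r' + 1) / 2 = r' by omega]
    rw [one_mul]
    calc (s i * s i') ^ (r' + r + 1)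
        = (s i * s i') ^ (r + 1) * (s i * s i') ^ r' := by rw [← pow_add]; ring_nf
    _ = ((s i * s i') ^ r)⁻¹ * (s i * s i') ^ r' := by rw [hqr]
    _ = (s i' * (s i * s i') ^ r * s i') * (s i * s i') ^ r' := by rw [conj_simple_pow]
    _ = s i' * (s i * s i') ^ r * (s i' * (s i * s i') ^ r') := by group


lemma ris_alt_double (i i' : B) :
    ris (alternatingWord i i' (2 * M i i'))
      = ris (alternatingWord i i' (M i i')) ++ ris (alternatingWord i i' (M i i')) := by
  rw [ris_alternatingWord, ris_alternatingWord, show 2 * M i i' = M i i' + M i i' by omega,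
    List.range_add, List.map_append, List.map_map]
  congr 1
  · apply List.map_congr_left
    intro k hk
    rw [List.mem_range] at hk
    rw [show M i i' + M i i' - 1 - k = (M i i' - 1 - k) + M i i' by omega,
      show M i i' + M i i' - k = (M i i' - k) + M i i' by omega,
      prod_alt_add cs i i' (M i i' - 1 - k), prod_alt_add cs i i' (M i i' - k)]
    rw [mul_inv_rev]
    group
  · apply List.map_congr_left
    intro k hk
    rw [List.mem_range] at hk
    simp only [Function.comp_apply]
    rw [show M i i' + M i i' - 1 - (M i i' + k) = M i i' - 1 - k by omega,
      show M i i' + M i i' - (M i i' + k) = M i i' - k by omega]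

lemma prod_map_sigma_alt (i i' : B) (m : ℕ) :
    ((alternatingWord i i' (2 * m)).map (sigma cs)).prod
      = (sigma cs i * sigma cs i') ^ m := by
  induction m with
  | zero => simp [alternatingWord]
  | succ m ih =>
    have hw : alternatingWord i i' (2 * (m + 1)) = i :: i' :: alternatingWord i i' (2 * m) := by
      rw [show 2 * (m + 1) = (2 * m + 1) + 1 by omega,
        alternatingWord_succ' i i' (2 * m + 1), alternatingWord_succ' i i' (2 * m)]
      have e1 : ¬ Even (2 * m + 1) := Nat.not_even_iff_odd.mpr ⟨m, rfl⟩
      have e2 : Even (2 * m) := ⟨m, by omega⟩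
      rw [if_neg e1, if_pos e2]
    rw [hw, List.map_cons, List.map_cons, List.prod_cons, List.prod_cons, ih, pow_succ',
      mul_assoc]

lemma sigma_liftable : ∀ i i' : B, (sigma cs i * sigma cs i') ^ M i i' = 1 := by
  intro i i'
  rw [← prod_map_sigma_alt]
  apply Equiv.ext
  rintro ⟨t, ε⟩
  rw [prod_map_sigma_apply]
  have hπ : π (alternatingWord i i' (2 * M i i')) = 1 := by
    rw [prod_alternatingWord_eq_mul_pow]
    have e : Even (2 * M i i') := ⟨M i i', by omega⟩
    rw [if_pos e, one_mul, show 2 * M i i' / 2 = M i i' by omega, cs.simple_mul_simple_pow]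
  have hcount : ((ris (alternatingWord i i' (2 * M i i'))).count t : ZMod 2) = 0 := by
    rw [ris_alt_double, List.count_append]
    push_cast
    exact zmod2_add_self _
  rw [hπ, hcount]
  simp

/-- The sign representation on reflections. -/
def phi : W →* Equiv.Perm (W × ZMod 2) :=
  cs.lift ⟨fun i => sigma cs i, sigma_liftable cs⟩

lemma phi_simple (i : B) : phi cs (s i) = sigma cs i :=
  cs.lift_apply_simple (sigma_liftable cs) i

lemma phi_wordProd (ω : List B) : phi cs (π ω) = ((ω.map (sigma cs)).prod) := by
  rw [CoxeterSystem.wordProd, map_list_prod (phi cs), List.map_map]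
  congr 1
  apply List.map_congr_left
  intro i _
  exact phi_simple cs i

/-- The sign of a reflection relative to a group element. -/
def eta (w t : W) : ZMod 2 := ((phi cs w) (t, 0)).2

lemma eta_eq_count (ω : List B) (t : W) : eta cs (π ω) t = ((ris ω).count t : ZMod 2) := by
  unfold eta
  rw [phi_wordProd, prod_map_sigma_apply]
  exact zero_add _

lemma phi_apply_eq (w t : W) (ε : ZMod 2) :
    phi cs w (t, ε) = (w * t * w⁻¹, ε + eta cs w t) := by
  obtain ⟨ω, rfl⟩ := cs.wordProd_surjective w
  rw [phi_wordProd, prod_map_sigma_apply, eta_eq_count]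

lemma eta_one (t : W) : eta cs 1 t = 0 := by
  unfold eta
  rw [map_one]
  rfl

lemma eta_mul_simple (u t : W) (i : B) :
    eta cs (u * s i) t = (if t = s i then 1 else 0) + eta cs u (s i * t * s i) := by
  unfold eta
  rw [map_mul, Equiv.Perm.mul_apply, phi_simple, sigma_apply, phi_apply_eq]
  simp
  rfl

lemma length_mul_lt_of_eta_ne (w t : W) (ht : cs.IsReflection t) (h : eta cs w t ≠ 0) :
    ℓ (w * t) < ℓ w := by
  generalize hn : ℓ w = n
  induction n using Nat.strong_induction_on generalizing w t with
  | _ n ih =>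
    rcases eq_or_ne w 1 with rfl | hw
    · exact absurd (eta_one cs t) h
    · obtain ⟨i, hi⟩ := cs.exists_rightDescent_of_ne_one hw
      rcases eq_or_ne t (s i) with rfl | hti
      · exact hn ▸ hi
      · have hw'' : w = (w * s i) * s i := (cs.simple_mul_simple_cancel_right i).symm
        have heta : eta cs w t = (if t = s i then 1 else 0)
            + eta cs (w * s i) (s i * t * s i) := by
          nth_rw 1 [hw'']
          rw [eta_mul_simple]
        rw [if_neg hti, zero_add] at heta
        have ht' : cs.IsReflection (s i * t * s i) := by
          have := ht.conj (s i)
          rwa [cs.inv_simple] at this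
        have hlt : ℓ (w * s i) < n := hn ▸ hi
        have h2 : ℓ ((w * s i) * (s i * t * s i)) < ℓ (w * s i) :=
          ih (ℓ (w * s i)) hlt (w * s i) (s i * t * s i) ht' (heta ▸ h) rfl
        have hwt : (w * s i) * (s i * t * s i) * s i = w * t := by
          calc (w * s i) * (s i * t * s i) * s i
              = w * ((s i * s i) * t * (s i * s i)) := by group
          _ = w * t := by rw [cs.simple_mul_simple_self, one_mul, mul_one]
        rw [← hwt]
        have hle := cs.length_mul_le ((w * s i) * (s i * t * s i)) (s i)
        rw [cs.length_simple] at hle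
        omega

lemma phi_refl_self (t : W) (ht : cs.IsReflection t) : phi cs t (t, 0) = (t, 1) := by
  obtain ⟨u, i, rfl⟩ := ht
  have h1 : phi cs u⁻¹ (u * s i * u⁻¹, 0) = (s i, eta cs u⁻¹ (u * s i * u⁻¹)) := by
    rw [phi_apply_eq, zero_add]
    congr 1
    group
  have h2 : phi cs u (s i, eta cs u⁻¹ (u * s i * u⁻¹)) = (u * s i * u⁻¹, 0) := by
    rw [← h1, ← Equiv.Perm.mul_apply, ← map_mul, mul_inv_cancel, map_one, Equiv.Perm.one_apply]
  have h0 : eta cs u⁻¹ (u * s i * u⁻¹) + eta cs u (s i) = 0 := by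
    have := congrArg Prod.snd h2
    rw [phi_apply_eq] at this
    exact this
  calc phi cs (u * s i * u⁻¹) (u * s i * u⁻¹, 0)
      = phi cs u (phi cs (s i) (phi cs u⁻¹ (u * s i * u⁻¹, 0))) := by
        rw [← Equiv.Perm.mul_apply, ← Equiv.Perm.mul_apply, ← map_mul, ← map_mul]
  _ = phi cs u (s i, eta cs u⁻¹ (u * s i * u⁻¹) + 1) := by
        rw [h1, phi_simple, sigma_apply, if_pos rfl]
        have hsss : s i * s i * s i = s i := by rw [cs.simple_mul_simple_self, one_mul]
        rw [hsss]
  _ = (u * s i * u⁻¹, 1) := by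
        rw [phi_apply_eq]
        congr 1
        rw [add_comm _ (1 : ZMod 2), add_assoc, h0, add_zero]

lemma eta_mul_refl_self (w t : W) (ht : cs.IsReflection t) :
    eta cs (w * t) t = eta cs w t + 1 := by
  unfold eta
  rw [map_mul, Equiv.Perm.mul_apply, phi_refl_self cs t ht, phi_apply_eq, phi_apply_eq]
  simp [add_comm]

lemma eta_ne_zero_of_isRightInversion (w t : W) (h : cs.IsRightInversion w t) :
    eta cs w t ≠ 0 := by
  intro h0
  obtain ⟨ht, hlt⟩ := h
  have h1 : eta cs (w * t) t ≠ 0 := by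
    rw [eta_mul_refl_self cs w t ht, h0, zero_add]
    decide
  have h2 := length_mul_lt_of_eta_ne cs (w * t) t ht h1
  rw [mul_assoc, ht.mul_self, mul_one] at h2
  omega

/-- Strong exchange: membership in the right inversion sequence. -/
lemma mem_ris_of_isRightInversion (ω : List B) (t : W)
    (h : cs.IsRightInversion (π ω) t) : t ∈ ris ω := by
  have hne := eta_ne_zero_of_isRightInversion cs _ t h
  rw [eta_eq_count] at hne
  by_contra hmem
  rw [List.count_eq_zero_of_not_mem hmem] at hne
  simp at hne

/-- The number of right inversions equals the length. -/
lemma ncard_rightInversions (w : W) : {t : W | cs.IsRightInversion w t}.ncard = ℓ w := by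
  obtain ⟨ω, hred, rfl⟩ := cs.exists_reduced_word' w
  have hset : {t : W | cs.IsRightInversion (π ω) t} = ↑(ris ω).toFinset := by
    ext t
    simp only [Set.mem_setOf_eq, List.coe_toFinset, Set.mem_setOf_eq]
    constructor
    · exact mem_ris_of_isRightInversion cs ω t
    · exact cs.isRightInversion_of_mem_rightInvSeq hred
  rw [hset, Set.ncard_coe_finset, List.toFinset_card_of_nodup hred.nodup_rightInvSeq,
    cs.length_rightInvSeq]
  exact hred.symm

section Parabolic
variable (J : Set B)

lemma wordProd_mem_closure {ω : List B} (hω : ∀ i ∈ ω, i ∈ J) :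
    π ω ∈ Subgroup.closure (cs.simple '' J) := by
  induction ω with
  | nil => simpa using Subgroup.one_mem _
  | cons i ω ih =>
    rw [cs.wordProd_cons]
    exact mul_mem (Subgroup.subset_closure ⟨i, hω i List.mem_cons_self, rfl⟩)
      (ih fun j hj => hω j (List.mem_cons_of_mem i hj))

lemma exists_word_of_mem_closure {x : W} (hx : x ∈ Subgroup.closure (cs.simple '' J)) :
    ∃ ω : List B, (∀ i ∈ ω, i ∈ J) ∧ x = π ω := by
  induction hx using Subgroup.closure_induction with
  | mem y hy =>
    obtain ⟨i, hi, rfl⟩ := hy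
    exact ⟨[i], by simpa using hi, (cs.wordProd_singleton i).symm⟩
  | one => exact ⟨[], by simp, by simp⟩
  | mul y z hy hz ihy ihz =>
    obtain ⟨ω₁, h1, rfl⟩ := ihy
    obtain ⟨ω₂, h2, rfl⟩ := ihz
    refine ⟨ω₁ ++ ω₂, ?_, (cs.wordProd_append ω₁ ω₂).symm⟩
    intro i hi
    rcases List.mem_append.mp hi with h | h
    exacts [h1 i h, h2 i h]
  | inv y hy ihy =>
    obtain ⟨ω, h1, rfl⟩ := ihy
    exact ⟨ω.reverse, fun i hi => h1 i (List.mem_reverse.mp hi), (cs.wordProd_reverse ω).symm⟩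

lemma mem_ris_TJ {ω : List B} (hω : ∀ i ∈ ω, i ∈ J) {t : W} (ht : t ∈ ris ω) :
    ∃ w ∈ Subgroup.closure (cs.simple '' J), ∃ i ∈ J, t = w * s i * w⁻¹ := by
  induction ω with
  | nil => simp [rightInvSeq] at ht
  | cons i ω ih =>
    rw [ris_cons] at ht
    rcases List.mem_cons.mp ht with rfl | h
    · refine ⟨(π ω)⁻¹,
        inv_mem (wordProd_mem_closure cs J fun j hj => hω j (List.mem_cons_of_mem i hj)),
        i, hω i List.mem_cons_self, ?_⟩
      rw [inv_inv]
    · exact ih (fun j hj => hω j (List.mem_cons_of_mem i hj)) h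

lemma exists_reduced_word_subset (ω : List B) :
    ∃ ω' : List B, cs.IsReduced ω' ∧ π ω' = π ω ∧ ∀ i ∈ ω', i ∈ ω := by
  generalize hn : ω.length = n
  induction n using Nat.strong_induction_on generalizing ω with
  | _ n ih =>
    by_cases hred : cs.IsReduced ω
    · exact ⟨ω, hred, rfl, fun _ h => h⟩
    · rcases List.eq_nil_or_concat ω with rfl | ⟨ω₀, i, rfl⟩
      · exact absurd (by simp [CoxeterSystem.IsReduced]) hred
      · rw [List.concat_eq_append] at hred hn ⊢
        have hlen : ω₀.length < n := by
          rw [← hn, List.length_append]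
          simp
        obtain ⟨ω₀', hr0, hp0, hsub0⟩ := ih ω₀.length hlen ω₀ rfl
        have hπeq : π (ω₀' ++ [i]) = π (ω₀ ++ [i]) := by
          rw [cs.wordProd_append, cs.wordProd_append, hp0]
        by_cases hred1 : cs.IsReduced (ω₀' ++ [i])
        · refine ⟨ω₀' ++ [i], hred1, hπeq, ?_⟩
          intro j hj
          rcases List.mem_append.mp hj with h | h
          · exact List.mem_append.mpr (Or.inl (hsub0 j h))
          · exact List.mem_append.mpr (Or.inr h)
        · have hlt : ℓ (π ω₀' * s i) < ℓ (π ω₀') := by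
            rcases cs.length_mul_simple (π ω₀') i with h | h
            · exfalso
              apply hred1
              unfold CoxeterSystem.IsReduced
              rw [cs.wordProd_append, cs.wordProd_singleton, h, List.length_append,
                List.length_singleton, hr0]
            · omega
          have hmem := mem_ris_of_isRightInversion cs ω₀' (s i)
            ⟨cs.isReflection_simple i, hlt⟩
          obtain ⟨k, hk, hkeq⟩ := List.getElem_of_mem hmem
          have hk' : k < ω₀'.length := by
            have := cs.length_rightInvSeq ω₀'
            omega
          have herase : π ω₀' * s i = π (ω₀'.eraseIdx k) := by
            have h1 := cs.wordProd_mul_getD_rightInvSeq ω₀' k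
            rw [List.getD_eq_getElem _ _ hk, hkeq] at h1
            exact h1
          have hlen2 : (ω₀'.eraseIdx k).length < n := by
            have h1 : ω₀'.length = ℓ (π ω₀) := by rw [← hp0]; exact hr0.symm
            have h2 : ℓ (π ω₀) ≤ ω₀.length := cs.length_wordProd_le ω₀
            have h3 : (ω₀'.eraseIdx k).length + 1 = ω₀'.length :=
              List.length_eraseIdx_add_one hk'
            rw [← hn, List.length_append, List.length_singleton]
            omega
          obtain ⟨ω'', hr2, hp2, hsub2⟩ := ih (ω₀'.eraseIdx k).length hlen2
            (ω₀'.eraseIdx k) rfl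
          refine ⟨ω'', hr2, ?_, ?_⟩
          · rw [hp2, ← herase, hp0, cs.wordProd_append, cs.wordProd_singleton]
          · intro j hj
            have h1 : j ∈ ω₀'.eraseIdx k := hsub2 j hj
            have h2 : j ∈ ω₀' := List.eraseIdx_subset h1
            exact List.mem_append.mpr (Or.inl (hsub0 j h2))

end Parabolic

end
end CoxSE

/-- in a finite standard parabolic subgroup `W_J` with longest element
`w_J`, for `x' ∈ W_J` the number of `z ∈ W_J` of the form `z = x't` with `t` a
reflection of `W_J` and `x' < z` (equivalently `ℓ(x') < ℓ(z)`) equals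
`ℓ(w_J) - ℓ(x')`. -/
theorem card_reflections_increasing_eq_length_sub {B W : Type*} [Group W] {M : CoxeterMatrix B}
    (cs : CoxeterSystem M W) (J : Set B) (x' wJ : W)
    (hfin : ((Subgroup.closure (cs.simple '' J) : Subgroup W) : Set W).Finite)
    (hwJ : wJ ∈ Subgroup.closure (cs.simple '' J))
    (hlongest : ∀ z ∈ Subgroup.closure (cs.simple '' J), cs.length z ≤ cs.length wJ)
    (hx' : x' ∈ Subgroup.closure (cs.simple '' J)) :
    {z : W | z ∈ Subgroup.closure (cs.simple '' J) ∧
        (∃ t : W, (∃ w ∈ Subgroup.closure (cs.simple '' J), ∃ i ∈ J, t = w * cs.simple i * w⁻¹) ∧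
          z = x' * t) ∧
        cs.length x' < cs.length z}.ncard
      = cs.length wJ - cs.length x' := by
  classical
  set K := Subgroup.closure (cs.simple '' J) with hK
  set T : Set W := {t | ∃ w ∈ K, ∃ i ∈ J, t = w * cs.simple i * w⁻¹} with hT
  have hTK : T ⊆ (K : Set W) := by
    rintro t ⟨w, hw, i, hi, rfl⟩
    exact mul_mem (mul_mem hw (Subgroup.subset_closure ⟨i, hi, rfl⟩)) (inv_mem hw)
  have hTrefl : ∀ t ∈ T, cs.IsReflection t := by
    rintro t ⟨w, hw, i, hi, rfl⟩
    exact ⟨w, i, rfl⟩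
  have hinvT : ∀ x ∈ K, ∀ t : W, cs.IsRightInversion x t → t ∈ T := by
    intro x hx t hinv
    obtain ⟨ω, hωJ, rfl⟩ := CoxSE.exists_word_of_mem_closure cs J hx
    exact CoxSE.mem_ris_TJ cs J hωJ (CoxSE.mem_ris_of_isRightInversion cs ω t hinv)
  have hTwJ : T = {t : W | cs.IsRightInversion wJ t} := by
    apply Set.Subset.antisymm
    · intro t ht
      refine ⟨hTrefl t ht, ?_⟩
      have h1 : wJ * t ∈ K := mul_mem hwJ (hTK ht)
      have h2 := hlongest (wJ * t) h1
      have h3 := (hTrefl t ht).length_mul_left_ne wJ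
      omega
    · intro t ht
      exact hinvT wJ hwJ t ht
  have hcardT : T.ncard = cs.length wJ := by
    rw [hTwJ]
    exact CoxSE.ncard_rightInversions cs wJ
  set D : Set W := {t : W | cs.IsRightInversion x' t} with hD
  have hDT : D ⊆ T := fun t ht => hinvT x' hx' t ht
  have hcardD : D.ncard = cs.length x' := CoxSE.ncard_rightInversions cs x'
  have hTfin : T.Finite := hfin.subset hTK
  have himg : {z : W | z ∈ K ∧
      (∃ t : W, (∃ w ∈ K, ∃ i ∈ J, t = w * cs.simple i * w⁻¹) ∧ z = x' * t) ∧
      cs.length x' < cs.length z} = (fun t => x' * t) '' (T \ D) := by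
    ext z
    simp only [Set.mem_setOf_eq, Set.mem_image, Set.mem_diff]
    constructor
    · rintro ⟨hzK, ⟨t, htT, rfl⟩, hlen⟩
      refine ⟨t, ⟨htT, ?_⟩, rfl⟩
      rintro ⟨-, hlt⟩
      omega
    · rintro ⟨t, ⟨htT, htD⟩, rfl⟩
      have htrefl := hTrefl t htT
      have hne := htrefl.length_mul_left_ne x'
      have hnlt : ¬ cs.length (x' * t) < cs.length x' := fun hc => htD ⟨htrefl, hc⟩
      exact ⟨mul_mem hx' (hTK htT), ⟨t, htT, rfl⟩, by omega⟩
  rw [himg, Set.ncard_image_of_injective _ (mul_right_injective x'),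
    Set.ncard_diff hDT (hTfin.subset hDT), hcardT, hcardD]
end

section
/- With notation as in the decomposition of Z^J under the involution ₛσ: every anti-invariant element z ∈ Z^J (i.e. ₛσ(z) = −z) has each component z_x divisible by α_s in S, and (α_s⁻¹ z_x)_{x∈W^J} is again an element of the structure algebra Z^J. -/
/-- The set `W^J` of minimal length representatives of the cosets `W/W_J`. -/
def minReps {B W : Type*} [Group W] {M : CoxeterMatrix B}
    (cs : CoxeterSystem M W) (J : Set B) : Set W :=
  {w | ∀ i ∈ J, cs.length w < cs.length (w * cs.simple i)}

/-- The structure algebra `Z^J` of the parabolic Bruhat moment graph: tuples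
`(z_x)_{x ∈ W^J}` of elements of the base ring `S` (playing the role of `Sym(V)`)
such that `z_x - z_y` is divisible by the label `α_t` whenever `x` and `y = (tx)^J`
are joined by an edge coming from a reflection `t`. -/
def structAlg {B W : Type*} [Group W] {M : CoxeterMatrix B}
    (cs : CoxeterSystem M W) (J : Set B) (S : Type*) [CommRing S]
    (α : W → S) : Set ((minReps cs J) → S) :=
  {z | ∀ t : W, cs.IsReflection t → ∀ x y : minReps cs J,
    (y : W)⁻¹ * (t * (x : W)) ∈ Subgroup.closure (cs.simple '' J) →
    z x - z y ∈ Ideal.span {α t}}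

/-- The involution `ₛσ` on tuples: `(ₛσ z)_x = τ_s (z_{(sx)^J})`, where
`m : W → W^J` takes the minimal length representative of a coset. -/
def sigmaInvol {B W : Type*} [Group W] {M : CoxeterMatrix B}
    (cs : CoxeterSystem M W) (J : Set B) (S : Type*) [CommRing S]
    (τ : W →* RingAut S) (mrep : W → minReps cs J) (i : B)
    (z : (minReps cs J) → S) : (minReps cs J) → S :=
  fun x => τ (cs.simple i) (z (mrep (cs.simple i * (x : W))))

open scoped Classical
namespace StructAlgAux
open CoxeterSystem List

variable {B : Type*} {W : Type*} [Group W] {M : CoxeterMatrix B} (cs : CoxeterSystem M W)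

private lemma conj_eq_iff (a x y : W) : a * x * a⁻¹ = y ↔ x = a⁻¹ * y * a := by
  constructor
  · rintro rfl; group
  · rintro rfl; group

noncomputable def eta (i : B) : Equiv.Perm (W × ℤˣ) :=
  Function.Involutive.toPerm
    (fun p => (cs.simple i * p.1 * cs.simple i, if p.1 = cs.simple i then -p.2 else p.2))
    (by
      rintro ⟨t, ε⟩
      have key : cs.simple i * (cs.simple i * t * cs.simple i) * cs.simple i = t := by
        rw [← mul_assoc, ← mul_assoc, cs.simple_mul_simple_self, one_mul, mul_assoc,
          cs.simple_mul_simple_self, mul_one]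
      by_cases h : t = cs.simple i
      · subst h
        simp [cs.simple_mul_simple_self]
      · have h2 : cs.simple i * t * cs.simple i ≠ cs.simple i := by
          intro hc
          apply h
          have := congrArg (fun w => cs.simple i * w * cs.simple i) hc
          simpa [key, cs.simple_mul_simple_self] using this
        simp [h, h2, key])

lemma eta_apply (i : B) (t : W) (ε : ℤˣ) :
    eta cs i (t, ε) = (cs.simple i * t * cs.simple i, if t = cs.simple i then -ε else ε) := rfl

/-- The sign contribution of the `k`-th double step. -/
noncomputable def bsgn (i j : B) (k : ℕ) (t : W) : ℤˣ :=
  (if t = ((cs.simple i * cs.simple j) ^ k)⁻¹ * cs.simple j * (cs.simple i * cs.simple j) ^ k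
    then -1 else 1) *
  (if t = ((cs.simple i * cs.simple j) ^ k)⁻¹ * (cs.simple j * cs.simple i * cs.simple j) *
      (cs.simple i * cs.simple j) ^ k then -1 else 1)



private lemma simple_conj_eq_iff (k : B) (x y : W) :
    cs.simple k * x * cs.simple k = y ↔ x = cs.simple k * y * cs.simple k := by
  constructor
  · rintro rfl
    simp [← mul_assoc, cs.simple_mul_simple_self]
  · rintro rfl
    simp [← mul_assoc, cs.simple_mul_simple_self]

private lemma sign_helper (c1 c2 : Prop) [Decidable c1] [Decidable c2] (P : ℤˣ) :
    (if c2 then -(if c1 then -P else P) else (if c1 then -P else P))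
      = P * ((if c1 then (-1 : ℤˣ) else 1) * (if c2 then (-1 : ℤˣ) else 1)) := by
  by_cases h1 : c1 <;> by_cases h2 : c2 <;> simp [h1, h2]

lemma eta_mul_pow_apply (i j : B) (n : ℕ) (t : W) (ε : ℤˣ) :
    ((eta cs i * eta cs j) ^ n) (t, ε) =
      ((cs.simple i * cs.simple j) ^ n * t * (((cs.simple i * cs.simple j) ^ n)⁻¹),
        ε * ∏ k ∈ Finset.range n, bsgn cs i j k t) := by
  induction n with
  | zero => simp
  | succ n ih =>
      rw [pow_succ']
      have happ : ((eta cs i * eta cs j) * (eta cs i * eta cs j) ^ n) (t, ε)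
          = (eta cs i) ((eta cs j) (((eta cs i * eta cs j) ^ n) (t, ε))) := rfl
      rw [happ, ih, eta_apply, eta_apply]
      set u := cs.simple i * cs.simple j with hu
      have hc1 : (u ^ n * t * (u ^ n)⁻¹ = cs.simple j) ↔
          (t = (u ^ n)⁻¹ * cs.simple j * u ^ n) := conj_eq_iff _ _ _
      have hc2 : (cs.simple j * (u ^ n * t * (u ^ n)⁻¹) * cs.simple j = cs.simple i) ↔
          (t = (u ^ n)⁻¹ * (cs.simple j * cs.simple i * cs.simple j) * u ^ n) :=
        (simple_conj_eq_iff cs j _ _).trans (conj_eq_iff _ _ _)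
      have hfst : cs.simple i * (cs.simple j * (u ^ n * t * (u ^ n)⁻¹) * cs.simple j)
            * cs.simple i = u ^ (n + 1) * t * (u ^ (n + 1))⁻¹ := by
        rw [pow_succ' u n, mul_inv_rev, hu, mul_inv_rev, cs.inv_simple, cs.inv_simple]
        group
      dsimp only
      rw [Prod.mk.injEq]
      refine ⟨hfst, ?_⟩
      rw [if_congr hc1 rfl rfl, if_congr hc2 rfl rfl, sign_helper,
        Finset.prod_range_succ]
      simp only [bsgn, ← hu]
      rw [mul_assoc, mul_assoc]

lemma braid_eta (i j : B) : ((eta cs i) * (eta cs j)) ^ (M i j) = 1 := by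
  rcases Nat.eq_zero_or_pos (M i j) with hm0 | hmpos
  · rw [hm0, pow_zero]
  apply Equiv.ext
  rintro ⟨t, ε⟩
  rw [eta_mul_pow_apply, cs.simple_mul_simple_pow i j]
  suffices h : (∏ k ∈ Finset.range (M i j), bsgn cs i j k t) = 1 by
    rw [h]; simp
  set m := M i j with hmm
  set u := cs.simple i * cs.simple j with hu
  have hum : u ^ m = 1 := cs.simple_mul_simple_pow i j
  have hmod : ∀ a : ℕ, u ^ (a % m) = u ^ a := by
    intro a
    conv_rhs => rw [← Nat.div_add_mod a m, pow_add, pow_mul, hum, one_pow, one_mul]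
  have hbase : cs.simple j * u * cs.simple j = u⁻¹ := by
    rw [hu, mul_inv_rev, cs.inv_simple, cs.inv_simple, ← mul_assoc,
      cs.simple_mul_simple_cancel_right]
  have hconj_j : ∀ a : ℕ, cs.simple j * u ^ a * cs.simple j = (u ^ a)⁻¹ := by
    intro a
    have h := map_pow (MulAut.conj (cs.simple j)) u a
    simp only [MulAut.conj_apply, cs.inv_simple] at h
    rw [h, hbase, inv_pow]
  have hbase_i : cs.simple i * u * cs.simple i = u⁻¹ := by
    rw [hu, mul_inv_rev, cs.inv_simple, cs.inv_simple, cs.simple_mul_simple_cancel_left]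
  have hconj_i : ∀ a : ℕ, cs.simple i * u ^ a * cs.simple i = (u ^ a)⁻¹ := by
    intro a
    have h := map_pow (MulAut.conj (cs.simple i)) u a
    simp only [MulAut.conj_apply, cs.inv_simple] at h
    rw [h, hbase_i, inv_pow]
  have hsplit : ∏ k ∈ Finset.range m, bsgn cs i j k t
      = (∏ k ∈ Finset.range m,
          (if t = (u ^ k)⁻¹ * cs.simple j * u ^ k then (-1 : ℤˣ) else 1))
        * (∏ k ∈ Finset.range m,
          (if t = (u ^ k)⁻¹ * (cs.simple j * cs.simple i * cs.simple j) * u ^ k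
            then (-1 : ℤˣ) else 1)) := by
    rw [← Finset.prod_mul_distrib]
    rfl
  rw [hsplit]
  have hcomm_uk : ∀ a k : ℕ, Commute (u ^ a) (u ^ k) := fun a k => (Commute.refl u).pow_pow a k
  have hval : ∀ (r r' : W) (a : ℕ), (u ^ a)⁻¹ * r * u ^ a = r' →
      ∀ k : ℕ, (u ^ ((k + a) % m))⁻¹ * r * u ^ ((k + a) % m) = (u ^ k)⁻¹ * r' * u ^ k := by
    intro r r' a hr k
    rw [hmod, pow_add, mul_inv_rev]
    calc (u ^ a)⁻¹ * (u ^ k)⁻¹ * r * (u ^ k * u ^ a)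
        = (u ^ k)⁻¹ * (u ^ a)⁻¹ * r * (u ^ a * u ^ k) := by
          rw [(hcomm_uk a k).inv_inv.eq, (hcomm_uk a k).eq]
      _ = (u ^ k)⁻¹ * ((u ^ a)⁻¹ * r * u ^ a) * u ^ k := by
          simp only [mul_assoc]
      _ = (u ^ k)⁻¹ * r' * u ^ k := by rw [hr]
  rcases Nat.even_or_odd m with ⟨μ, hμ⟩ | ⟨δ, hδ⟩
  -- Even case
  · have hμpos : 0 < μ := by omega
    have huμ : (u ^ μ)⁻¹ = u ^ μ := by
      apply inv_eq_of_mul_eq_one_right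
      rw [← pow_add, ← hμ, hum]
    have hcj : u ^ μ * cs.simple j = cs.simple j * u ^ μ := by
      have h := hconj_j μ
      rw [huμ] at h
      calc u ^ μ * cs.simple j
          = (cs.simple j * u ^ μ * cs.simple j) * cs.simple j := by rw [h]
        _ = cs.simple j * u ^ μ := by
            rw [mul_assoc, cs.simple_mul_simple_self, mul_one]
    have hci : u ^ μ * cs.simple i = cs.simple i * u ^ μ := by
      have h := hconj_i μ
      rw [huμ] at h
      calc u ^ μ * cs.simple i
          = (cs.simple i * u ^ μ * cs.simple i) * cs.simple i := by rw [h]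
        _ = cs.simple i * u ^ μ := by
            rw [mul_assoc, cs.simple_mul_simple_self, mul_one]
    have hfix : ∀ r : W, u ^ μ * r = r * u ^ μ → (u ^ μ)⁻¹ * r * u ^ μ = r := by
      intro r hr
      rw [huμ, hr, mul_assoc, ← pow_add, ← hμ, hum, mul_one]
    have hfix_j : (u ^ μ)⁻¹ * cs.simple j * u ^ μ = cs.simple j := hfix _ hcj
    have hfix_r2 : (u ^ μ)⁻¹ * (cs.simple j * cs.simple i * cs.simple j) * u ^ μ
        = cs.simple j * cs.simple i * cs.simple j := by
      apply hfix
      calc u ^ μ * (cs.simple j * cs.simple i * cs.simple j)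
          = (u ^ μ * cs.simple j) * cs.simple i * cs.simple j := by
            simp only [mul_assoc]
        _ = cs.simple j * (u ^ μ * cs.simple i) * cs.simple j := by
            rw [hcj]; simp only [mul_assoc]
        _ = cs.simple j * cs.simple i * (u ^ μ * cs.simple j) := by
            rw [hci]; simp only [mul_assoc]
        _ = cs.simple j * cs.simple i * cs.simple j * u ^ μ := by
            rw [hcj]; simp only [mul_assoc]
    have horb : ∀ (r : W), (u ^ μ)⁻¹ * r * u ^ μ = r →
        (∏ k ∈ Finset.range m, (if t = (u ^ k)⁻¹ * r * u ^ k then (-1 : ℤˣ) else 1)) = 1 := by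
      intro r hr
      refine Finset.prod_involution (fun a _ => (a + μ) % m) ?_ ?_ ?_ ?_
      · intro a ha
        rw [hval r r μ hr a]
        by_cases h : t = (u ^ a)⁻¹ * r * u ^ a <;> simp [h]
      · intro a ha hne
        intro hcon
        have haa : a < m := Finset.mem_range.mp ha
        have heq : (a + μ) % m = a % m := by rw [hcon, Nat.mod_eq_of_lt haa]
        have hdvd : m ∣ (a + μ) - a := (Nat.modEq_iff_dvd' (by omega)).mp heq.symm
        simp only [Nat.add_sub_cancel_left] at hdvd
        have := Nat.le_of_dvd hμpos hdvd
        omega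
      · intro a ha
        exact Finset.mem_range.mpr (Nat.mod_lt _ hmpos)
      · intro a ha
        have haa : a < m := Finset.mem_range.mp ha
        rw [Nat.mod_add_mod, add_assoc, show μ + μ = m by omega, Nat.add_mod_right,
          Nat.mod_eq_of_lt haa]
    rw [horb _ hfix_j, horb _ hfix_r2, mul_one]
  -- Odd case
  · have hδltm : δ < m := by omega
    have hr2 : cs.simple j * cs.simple i * cs.simple j = u⁻¹ * cs.simple j := by
      rw [hu, mul_inv_rev, cs.inv_simple, cs.inv_simple]
    have key : (u ^ δ)⁻¹ * (cs.simple j * cs.simple i * cs.simple j) * u ^ δ = cs.simple j := by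
      rw [hr2]
      have h := hconj_j δ
      calc (u ^ δ)⁻¹ * (u⁻¹ * cs.simple j) * u ^ δ
          = (u ^ δ)⁻¹ * u⁻¹ * (cs.simple j * u ^ δ * cs.simple j) * cs.simple j := by
            simp only [mul_assoc, cs.simple_mul_simple_self, mul_one]
        _ = (u ^ δ)⁻¹ * u⁻¹ * (u ^ δ)⁻¹ * cs.simple j := by rw [h]
        _ = (u ^ (2 * δ + 1))⁻¹ * cs.simple j := by
            have : (u ^ (2 * δ + 1))⁻¹ = (u ^ δ)⁻¹ * u⁻¹ * (u ^ δ)⁻¹ := by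
              rw [show (2 : ℕ) * δ + 1 = δ + 1 + δ by omega, pow_add, pow_add, pow_one,
                mul_inv_rev, mul_inv_rev, mul_assoc]
            rw [this]
        _ = cs.simple j := by rw [← hδ, hum, inv_one, one_mul]
    have hAB : ∀ k : ℕ,
        (if t = (u ^ k)⁻¹ * cs.simple j * u ^ k then (-1 : ℤˣ) else 1)
          = (if t = (u ^ ((k + δ) % m))⁻¹ * (cs.simple j * cs.simple i * cs.simple j)
              * u ^ ((k + δ) % m) then (-1 : ℤˣ) else 1) := by
      intro k
      rw [hval _ _ δ key k]
    have hprodeq : (∏ k ∈ Finset.range m,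
        (if t = (u ^ k)⁻¹ * cs.simple j * u ^ k then (-1 : ℤˣ) else 1))
        = (∏ k ∈ Finset.range m,
          (if t = (u ^ k)⁻¹ * (cs.simple j * cs.simple i * cs.simple j) * u ^ k
            then (-1 : ℤˣ) else 1)) := by
      refine Finset.prod_nbij' (fun k => (k + δ) % m) (fun k => (k + (m - δ)) % m)
        ?_ ?_ ?_ ?_ ?_
      · intro a _; exact Finset.mem_range.mpr (Nat.mod_lt _ hmpos)
      · intro a _; exact Finset.mem_range.mpr (Nat.mod_lt _ hmpos)
      · intro a ha
        have haa : a < m := Finset.mem_range.mp ha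
        rw [Nat.mod_add_mod, show a + δ + (m - δ) = a + m by omega, Nat.add_mod_right,
          Nat.mod_eq_of_lt haa]
      · intro a ha
        have haa : a < m := Finset.mem_range.mp ha
        rw [Nat.mod_add_mod, show a + (m - δ) + δ = a + m by omega, Nat.add_mod_right,
          Nat.mod_eq_of_lt haa]
      · intro a _
        exact hAB a
    rw [← hprodeq, ← Finset.prod_mul_distrib]
    have hone : ∀ k ∈ Finset.range m,
        ((if t = (u ^ k)⁻¹ * cs.simple j * u ^ k then (-1 : ℤˣ) else 1)
          * (if t = (u ^ k)⁻¹ * cs.simple j * u ^ k then (-1 : ℤˣ) else 1)) = 1 := by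
      intro k _
      by_cases h : t = (u ^ k)⁻¹ * cs.simple j * u ^ k <;> simp [h]
    rw [Finset.prod_congr rfl hone, Finset.prod_const_one]

/-- The Eriksson sign representation of the Coxeter group. -/
noncomputable def phi : W →* Equiv.Perm (W × ℤˣ) :=
  cs.lift ⟨fun k => eta cs k, fun k l => braid_eta cs k l⟩

lemma phi_simple (k : B) : phi cs (cs.simple k) = eta cs k :=
  cs.lift_apply_simple (fun k l => braid_eta cs k l) k

lemma phi_wordProd_apply (ω : List B) (t : W) (ε : ℤˣ) :
    phi cs (cs.wordProd ω) (t, ε) =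
      (cs.wordProd ω * t * (cs.wordProd ω)⁻¹,
        ε * (if Even ((cs.rightInvSeq ω).count t) then 1 else -1)) := by
  induction ω with
  | nil => simp [cs.wordProd_nil]
  | cons k ω ih =>
      rw [cs.wordProd_cons, map_mul, Equiv.Perm.mul_apply, ih, phi_simple, eta_apply]
      have hcond : (cs.wordProd ω * t * (cs.wordProd ω)⁻¹ = cs.simple k) ↔
          (t = (cs.wordProd ω)⁻¹ * cs.simple k * cs.wordProd ω) := conj_eq_iff _ _ _
      have hris : cs.rightInvSeq (k :: ω)
          = ((cs.wordProd ω)⁻¹ * cs.simple k * cs.wordProd ω) :: cs.rightInvSeq ω := rfl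
      have hfst : cs.simple k * (cs.wordProd ω * t * (cs.wordProd ω)⁻¹) * cs.simple k
          = (cs.simple k * cs.wordProd ω) * t * (cs.simple k * cs.wordProd ω)⁻¹ := by
        rw [mul_inv_rev, cs.inv_simple]
        simp only [mul_assoc]
      rw [Prod.mk.injEq]
      refine ⟨hfst, ?_⟩
      rw [if_congr hcond rfl rfl, hris]
      by_cases h : t = (cs.wordProd ω)⁻¹ * cs.simple k * cs.wordProd ω
      · rw [if_pos h, ← h, List.count_cons_self]
        by_cases hev : Even ((cs.rightInvSeq ω).count t)
        · rw [if_pos hev, if_neg (by simp [Nat.even_add_one, hev])]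
          simp
        · rw [if_neg hev, if_pos (by simp [Nat.even_add_one, hev])]
          simp
      · rw [if_neg h, List.count_cons_of_ne (fun hc => h hc.symm)]

lemma phi_isReflection_apply {t : W} (ht : cs.IsReflection t) (ε : ℤˣ) :
    phi cs t (t, ε) = (t, -ε) := by
  obtain ⟨v, k, rfl⟩ := ht
  obtain ⟨ω, -, hω⟩ := cs.exists_reduced_word' v⁻¹
  have hvrev : cs.wordProd ω.reverse = v := by rw [cs.wordProd_reverse, ← hω, inv_inv]
  set t := v * cs.simple k * v⁻¹ with hts
  have hvt : v⁻¹ * t * v = cs.simple k := by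
    rw [hts]
    simp only [mul_assoc, inv_mul_cancel_left, inv_mul_cancel, mul_one]
  set c : ℤˣ := if Even ((cs.rightInvSeq ω).count t) then 1 else -1 with hc
  set c₂ : ℤˣ := if Even ((cs.rightInvSeq ω.reverse).count (cs.simple k)) then 1 else -1 with hc₂
  have h1 : phi cs v⁻¹ (t, ε) = (cs.simple k, ε * c) := by
    rw [hω, phi_wordProd_apply, ← hω, ← hc, Prod.mk.injEq]
    refine ⟨?_, rfl⟩
    rw [inv_inv]
    exact hvt
  have h2 : phi cs (cs.simple k) (cs.simple k, ε * c) = (cs.simple k, -(ε * c)) := by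
    rw [phi_simple, eta_apply, if_pos rfl, cs.simple_mul_simple_self, one_mul]
  have h3 : ∀ δ : ℤˣ, phi cs v (cs.simple k, δ) = (t, δ * c₂) := by
    intro δ
    rw [← hvrev, phi_wordProd_apply, ← hc₂, hvrev, hts]
  have hcc : c * c₂ = 1 := by
    have hcomp : phi cs v (phi cs v⁻¹ (t, ε)) = (t, ε) := by
      rw [← Equiv.Perm.mul_apply, ← map_mul, mul_inv_cancel, map_one, Equiv.Perm.one_apply]
    rw [h1, h3] at hcomp
    have h4 := ((Prod.mk.injEq _ _ _ _).mp hcomp).2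
    rw [mul_assoc] at h4
    exact mul_left_cancel (a := ε) (by rw [h4, mul_one])
  have hmm : phi cs t = phi cs v * phi cs (cs.simple k) * phi cs v⁻¹ := by
    rw [hts, map_mul, map_mul]
  rw [hmm, Equiv.Perm.mul_apply, Equiv.Perm.mul_apply, h1, h2, h3, Prod.mk.injEq]
  refine ⟨rfl, ?_⟩
  rw [neg_mul, mul_assoc, hcc, mul_one]

/-- Strong exchange property. -/
theorem strong_exchange {ω : List B} (hω : cs.IsReduced ω) {t : W} (ht : cs.IsReflection t)
    (hlt : cs.length (cs.wordProd ω * t) < cs.length (cs.wordProd ω)) :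
    t ∈ cs.rightInvSeq ω := by
  by_contra hmem
  have hcount : (cs.rightInvSeq ω).count t = 0 := List.count_eq_zero.mpr hmem
  obtain ⟨θ, hθred, hθ⟩ := cs.exists_reduced_word' (cs.wordProd ω * t)
  have hw : cs.wordProd ω = cs.wordProd θ * t := by
    rw [← hθ, mul_assoc, ht.mul_self, mul_one]
  have hA : phi cs (cs.wordProd ω) (t, 1)
      = (cs.wordProd ω * t * (cs.wordProd ω)⁻¹, 1) := by
    rw [phi_wordProd_apply, hcount]
    simp
  have hB : phi cs (cs.wordProd ω) (t, 1)
      = (cs.wordProd θ * t * (cs.wordProd θ)⁻¹,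
          -(if Even ((cs.rightInvSeq θ).count t) then 1 else -1)) := by
    rw [hw, map_mul, Equiv.Perm.mul_apply, phi_isReflection_apply cs ht,
      phi_wordProd_apply]
    rw [Prod.mk.injEq]
    refine ⟨rfl, ?_⟩
    rw [neg_mul, one_mul]
  have hsign : (1 : ℤˣ) = -(if Even ((cs.rightInvSeq θ).count t) then 1 else -1) := by
    have := hA.symm.trans hB
    exact ((Prod.mk.injEq _ _ _ _).mp this).2
  have hodd : ¬ Even ((cs.rightInvSeq θ).count t) := by
    intro hev
    rw [if_pos hev] at hsign
    exact absurd hsign (by decide)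
  have htmem : t ∈ cs.rightInvSeq θ := by
    rw [← List.count_pos_iff]
    rcases Nat.eq_zero_or_pos ((cs.rightInvSeq θ).count t) with h0 | h
    · exact absurd (by rw [h0]; exact Even.zero) hodd
    · exact h
  have hinv := cs.isRightInversion_of_mem_rightInvSeq hθred htmem
  have : cs.length (cs.wordProd θ * t) < cs.length (cs.wordProd θ) := hinv.2
  rw [← hθ, mul_assoc, ht.mul_self, mul_one] at this
  omega

/-- The exchange property, in terms of erasing a letter. -/
theorem exchange {ω : List B} (hω : cs.IsReduced ω) {t : W} (ht : cs.IsReflection t)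
    (hlt : cs.length (cs.wordProd ω * t) < cs.length (cs.wordProd ω)) :
    ∃ k < ω.length, cs.wordProd ω * t = cs.wordProd (ω.eraseIdx k) := by
  have hmem := strong_exchange cs hω ht hlt
  obtain ⟨n, hn, hget⟩ := List.getElem_of_mem hmem
  have hn' : n < ω.length := by
    rwa [cs.length_rightInvSeq] at hn
  refine ⟨n, hn', ?_⟩
  have : t = (cs.rightInvSeq ω).getD n 1 := by
    rw [List.getD_eq_getElem _ _ hn, hget]
  rw [this, cs.wordProd_mul_getD_rightInvSeq]

/-- Deletion: any word may be replaced by a reduced word using only its letters. -/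
theorem exists_reduced_subword (θ : List B) :
    ∃ θ' : List B, cs.IsReduced θ' ∧ cs.wordProd θ' = cs.wordProd θ ∧ ∀ b ∈ θ', b ∈ θ := by
  generalize hn : θ.length = n
  induction n using Nat.strong_induction_on generalizing θ with
  | _ n ih =>
  subst hn
  by_cases hred : cs.IsReduced θ
  · exact ⟨θ, hred, rfl, fun b hb => hb⟩
  have hθne : θ ≠ [] := by
    rintro rfl
    exact hred (by simp [CoxeterSystem.IsReduced])
  have hθpos : 0 < θ.length := List.length_pos_iff.mpr hθne
  have hex : ∃ k, ¬ cs.IsReduced (θ.take (k + 1)) := by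
    refine ⟨θ.length - 1, ?_⟩
    have htk : θ.take (θ.length - 1 + 1) = θ := by
      rw [Nat.sub_add_cancel hθpos, List.take_length]
    rwa [htk]
  have hk1 : ¬ cs.IsReduced (θ.take (Nat.find hex + 1)) := Nat.find_spec hex
  set k := Nat.find hex with hkdef
  have hkmin : ∀ k' < k, cs.IsReduced (θ.take (k' + 1)) :=
    fun k' h => not_not.mp (Nat.find_min hex h)
  have hρred : cs.IsReduced (θ.take k) := by
    rcases Nat.eq_zero_or_pos k with h0 | hpos
    · rw [h0]; simp [CoxeterSystem.IsReduced]
    · have := hkmin (k - 1) (by omega)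
      rwa [Nat.sub_add_cancel hpos] at this
  have hklt : k < θ.length := by
    have : k ≤ θ.length - 1 := by
      apply Nat.find_min'
      have htk : θ.take (θ.length - 1 + 1) = θ := by
        rw [Nat.sub_add_cancel hθpos, List.take_length]
      rwa [htk]
    omega
  have htake : θ.take (k + 1) = θ.take k ++ [θ[k]] := by
    rw [List.take_succ, List.getElem?_eq_getElem hklt]
    rfl
  have hlen_take : (θ.take k).length = k := by
    rw [List.length_take]
    omega
  have hρlen : cs.length (cs.wordProd (θ.take k)) = k := by
    have := hρred
    rwa [CoxeterSystem.IsReduced, hlen_take] at this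
  have hπtake : cs.wordProd (θ.take (k + 1)) = cs.wordProd (θ.take k) * cs.simple θ[k] := by
    rw [htake, cs.wordProd_append, cs.wordProd_singleton]
  have hnotred : cs.length (cs.wordProd (θ.take k) * cs.simple θ[k]) ≠ k + 1 := by
    intro hc
    apply hk1
    rw [CoxeterSystem.IsReduced, hπtake, hc, List.length_take]
    omega
  have hlt : cs.length (cs.wordProd (θ.take k) * cs.simple θ[k])
      < cs.length (cs.wordProd (θ.take k)) := by
    rcases cs.length_mul_simple (cs.wordProd (θ.take k)) θ[k] with hc | hc
    · exact absurd (by rw [hc, hρlen]) hnotred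
    · omega
  obtain ⟨k', hk'lt, heq⟩ := exchange cs hρred (cs.isReflection_simple θ[k]) hlt
  set θ'' := (θ.take k).eraseIdx k' ++ θ.drop (k + 1) with hθ''
  have hπ'' : cs.wordProd θ'' = cs.wordProd θ := by
    rw [hθ'', cs.wordProd_append, ← heq, ← hπtake, ← cs.wordProd_append, List.take_append_drop]
  have hlen'' : θ''.length < θ.length := by
    rw [hθ'', List.length_append, List.length_eraseIdx, if_pos hk'lt,
      hlen_take, List.length_drop]
    omega
  have hsub'' : ∀ b ∈ θ'', b ∈ θ := by
    intro b hb
    rcases List.mem_append.mp hb with hb | hb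
    · exact List.take_subset k θ (((θ.take k).eraseIdx_sublist k').mem hb)
    · exact List.drop_subset (k + 1) θ hb
  obtain ⟨θ', h1, h2, h3⟩ := ih θ''.length hlen'' θ'' rfl
  exact ⟨θ', h1, by rw [h2, hπ''], fun b hb => hsub'' b (h3 b hb)⟩

theorem exists_reduced_J_word (J : Set B) {p : W}
    (hp : p ∈ Subgroup.closure (cs.simple '' J)) :
    ∃ θ : List B, (∀ b ∈ θ, b ∈ J) ∧ cs.IsReduced θ ∧ cs.wordProd θ = p := by
  have hword : ∃ θ : List B, (∀ b ∈ θ, b ∈ J) ∧ cs.wordProd θ = p := by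
    induction hp using Subgroup.closure_induction with
    | mem x hx =>
        obtain ⟨b, hbJ, rfl⟩ := hx
        exact ⟨[b], by simpa using hbJ, cs.wordProd_singleton b⟩
    | one => exact ⟨[], by simp, by simp⟩
    | mul x y hx hy ihx ihy =>
        obtain ⟨θ₁, h1, rfl⟩ := ihx
        obtain ⟨θ₂, h2, rfl⟩ := ihy
        refine ⟨θ₁ ++ θ₂, ?_, (cs.wordProd_append θ₁ θ₂)⟩
        intro b hb
        rcases List.mem_append.mp hb with hb | hb
        · exact h1 b hb
        · exact h2 b hb
    | inv x hx ihx =>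
        obtain ⟨θ₁, h1, rfl⟩ := ihx
        exact ⟨θ₁.reverse, fun b hb => h1 b (List.mem_reverse.mp hb),
          cs.wordProd_reverse θ₁⟩
  obtain ⟨θ₀, hJ, hπ⟩ := hword
  obtain ⟨θ, hred, hπ', hsub⟩ := exists_reduced_subword cs θ₀
  exact ⟨θ, fun b hb => hJ b (hsub b hb), hred, by rw [hπ', hπ]⟩

theorem wordProd_mem_closure (J : Set B) (θ : List B) (h : ∀ b ∈ θ, b ∈ J) :
    cs.wordProd θ ∈ Subgroup.closure (cs.simple '' J) := by
  induction θ with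
  | nil => rw [cs.wordProd_nil]; exact one_mem _
  | cons b θ ih =>
      rw [cs.wordProd_cons]
      exact mul_mem (Subgroup.subset_closure ⟨b, h b (List.mem_cons_self), rfl⟩)
        (ih fun c hc => h c (List.mem_cons_of_mem b hc))

/-- Length is additive on cosets of standard parabolic subgroups, relative to an
element of minimal length in its coset. -/
theorem min_coset_additive (J : Set B) (mw : W)
    (hmin : ∀ p ∈ Subgroup.closure (cs.simple '' J),
      cs.length mw ≤ cs.length (mw * p))
    {p : W} (hp : p ∈ Subgroup.closure (cs.simple '' J)) :
    cs.length (mw * p) = cs.length mw + cs.length p := by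
  generalize hn : cs.length p = n
  induction n using Nat.strong_induction_on generalizing p with
  | _ n ih =>
  subst hn
  obtain ⟨θ, hθJ, hθred, hθπ⟩ := exists_reduced_J_word cs J hp
  rcases List.eq_nil_or_concat θ with rfl | ⟨θ', j, rfl⟩
  · have : p = 1 := by rw [← hθπ, cs.wordProd_nil]
    subst this
    simp
  rw [List.concat_eq_append] at hθπ hθred hθJ
  have hjJ : j ∈ J := hθJ j (by simp)
  have hp'red : cs.IsReduced θ' := by
    have := CoxeterSystem.IsReduced.take hθred θ'.length
    rwa [List.take_left] at this
  have hpp : p = cs.wordProd θ' * cs.simple j := by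
    rw [← hθπ, cs.wordProd_append, cs.wordProd_singleton]
  have hlenp : cs.length p = θ'.length + 1 := by
    rw [← hθπ]
    have := hθred
    rw [CoxeterSystem.IsReduced] at this
    rw [this, List.length_append, List.length_singleton]
  have hlenp' : cs.length (cs.wordProd θ') = θ'.length := hp'red
  have hp'mem : cs.wordProd θ' ∈ Subgroup.closure (cs.simple '' J) :=
    wordProd_mem_closure cs J θ' (fun b hb => hθJ b (List.mem_append_left _ hb))
  have ihp' : cs.length (mw * cs.wordProd θ')
      = cs.length mw + cs.length (cs.wordProd θ') :=
    ih (cs.length (cs.wordProd θ')) (by omega) hp'mem rfl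
  rcases cs.length_mul_simple (mw * cs.wordProd θ') j with hcase | hcase
  · rw [hpp, ← mul_assoc, hcase, ihp', hlenp', ← hpp, hlenp]
    omega
  · exfalso
    have hlt : cs.length ((mw * cs.wordProd θ') * cs.simple j)
        < cs.length (mw * cs.wordProd θ') := by omega
    obtain ⟨ωm, hωmred, hωm⟩ := cs.exists_reduced_word' mw
    have hπcomb : cs.wordProd (ωm ++ θ') = mw * cs.wordProd θ' := by
      rw [cs.wordProd_append, ← hωm]
    have hcomb_red : cs.IsReduced (ωm ++ θ') := by
      rw [CoxeterSystem.IsReduced, hπcomb, ihp', List.length_append, hlenp']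
      congr 1
      rw [hωm]
      exact hωmred
    have hlt2 : cs.length (cs.wordProd (ωm ++ θ') * cs.simple j)
        < cs.length (cs.wordProd (ωm ++ θ')) := by
      rw [hπcomb]
      exact hlt
    obtain ⟨k, hk, heq⟩ := exchange cs hcomb_red (cs.isReflection_simple j) hlt2
    rw [hπcomb] at heq
    by_cases hkc : k < ωm.length
    · rw [List.eraseIdx_append_of_lt_length hkc, cs.wordProd_append] at heq
      have hm'eq : cs.wordProd (ωm.eraseIdx k)
          = mw * (cs.wordProd θ' * cs.simple j * (cs.wordProd θ')⁻¹) := by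
        have := heq.symm
        calc cs.wordProd (ωm.eraseIdx k)
            = cs.wordProd (ωm.eraseIdx k) * cs.wordProd θ' * (cs.wordProd θ')⁻¹ := by
              rw [mul_assoc, mul_inv_cancel, mul_one]
          _ = mw * cs.wordProd θ' * cs.simple j * (cs.wordProd θ')⁻¹ := by rw [← heq]
          _ = mw * (cs.wordProd θ' * cs.simple j * (cs.wordProd θ')⁻¹) := by
              simp only [mul_assoc]
      have hqmem : cs.wordProd θ' * cs.simple j * (cs.wordProd θ')⁻¹
          ∈ Subgroup.closure (cs.simple '' J) :=
        mul_mem (mul_mem hp'mem (Subgroup.subset_closure ⟨j, hjJ, rfl⟩)) (inv_mem hp'mem)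
      have hge := hmin _ hqmem
      rw [← hm'eq] at hge
      have hle := cs.length_wordProd_le (ωm.eraseIdx k)
      rw [List.length_eraseIdx, if_pos hkc] at hle
      have hmwlen : cs.length mw = ωm.length := by rw [hωm]; exact hωmred
      omega
    · push_neg at hkc
      rw [List.eraseIdx_append_of_length_le hkc, cs.wordProd_append, ← hωm] at heq
      have hcancel : cs.wordProd θ' * cs.simple j
          = cs.wordProd (θ'.eraseIdx (k - ωm.length)) := by
        have h' : mw * (cs.wordProd θ' * cs.simple j)
            = mw * cs.wordProd (θ'.eraseIdx (k - ωm.length)) := by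
          rw [← mul_assoc]
          exact heq
        exact mul_left_cancel h'
      have hle := cs.length_wordProd_le (θ'.eraseIdx (k - ωm.length))
      rw [← hcancel, ← hpp] at hle
      have hklen : k - ωm.length < θ'.length := by
        rw [List.length_append] at hk
        omega
      rw [List.length_eraseIdx, if_pos hklen] at hle
      omega

/-- Uniqueness of coset representatives without right descents in `J`. -/
theorem noDescent_unique (J : Set B) {u v : W}
    (hu : ∀ i ∈ J, cs.length u < cs.length (u * cs.simple i))
    (hv : ∀ i ∈ J, cs.length v < cs.length (v * cs.simple i))
    (huv : u⁻¹ * v ∈ Subgroup.closure (cs.simple '' J)) : u = v := by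
  have hex : ∃ n, ∃ p, p ∈ Subgroup.closure (cs.simple '' J) ∧ cs.length (u * p) = n :=
    ⟨cs.length (u * 1), 1, one_mem _, rfl⟩
  obtain ⟨p₀, hp₀mem, hp₀len⟩ := Nat.find_spec hex
  set mw := u * p₀ with hmw
  have hmin : ∀ p ∈ Subgroup.closure (cs.simple '' J),
      cs.length mw ≤ cs.length (mw * p) := by
    intro p hp
    have h1 : mw * p = u * (p₀ * p) := by rw [hmw, mul_assoc]
    rw [h1, hp₀len]
    exact Nat.find_min' hex ⟨p₀ * p, mul_mem hp₀mem hp, rfl⟩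
  have hkey : ∀ x : W, (∀ i ∈ J, cs.length x < cs.length (x * cs.simple i)) →
      ∀ p ∈ Subgroup.closure (cs.simple '' J), x = mw * p → x = mw := by
    intro x hx p hp hxp
    by_contra hne
    have hp1 : p ≠ 1 := by
      rintro rfl
      rw [mul_one] at hxp
      exact hne hxp
    obtain ⟨θ, hθJ, hθred, hθπ⟩ := exists_reduced_J_word cs J hp
    rcases List.eq_nil_or_concat θ with rfl | ⟨θ', j, rfl⟩
    · exact hp1 (by rw [← hθπ, cs.wordProd_nil])
    rw [List.concat_eq_append] at hθπ hθred hθJ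
    have hjJ : j ∈ J := hθJ j (by simp)
    have hp'red : cs.IsReduced θ' := by
      have := CoxeterSystem.IsReduced.take hθred θ'.length
      rwa [List.take_left] at this
    have hpp : p = cs.wordProd θ' * cs.simple j := by
      rw [← hθπ, cs.wordProd_append, cs.wordProd_singleton]
    have hlenp : cs.length p = θ'.length + 1 := by
      rw [← hθπ]
      have h5 := hθred
      rw [CoxeterSystem.IsReduced] at h5
      rw [h5, List.length_append, List.length_singleton]
    have hlenp' : cs.length (cs.wordProd θ') = θ'.length := hp'red
    have hp'mem : cs.wordProd θ' ∈ Subgroup.closure (cs.simple '' J) :=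
      wordProd_mem_closure cs J θ' (fun b hb => hθJ b (List.mem_append_left _ hb))
    have hxj : x * cs.simple j = mw * cs.wordProd θ' := by
      rw [hxp, hpp, ← mul_assoc, mul_assoc (mw * cs.wordProd θ'),
        cs.simple_mul_simple_self, mul_one]
    have hlen1 : cs.length (x * cs.simple j) = cs.length mw + θ'.length := by
      rw [hxj, min_coset_additive cs J mw hmin hp'mem, hlenp']
    have hlen2 : cs.length x = cs.length mw + θ'.length + 1 := by
      rw [hxp, min_coset_additive cs J mw hmin hp, hlenp]
      omega
    have := hx j hjJ
    omega
  have hu' : u = mw := by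
    apply hkey u hu p₀⁻¹ (inv_mem hp₀mem)
    rw [hmw, mul_assoc, mul_inv_cancel, mul_one]
  have hv' : v = mw := by
    apply hkey v hv (p₀⁻¹ * (u⁻¹ * v)) (mul_mem (inv_mem hp₀mem) huv)
    rw [hmw]
    simp only [mul_assoc, mul_inv_cancel_left, inv_mul_cancel_left]
  rw [hu', hv']

end StructAlgAux

open StructAlgAux in
/-- every anti-invariant element `z` of the structure algebra
(`ₛσ(z) = -z`) has all components divisible by `α_s`, and the componentwise quotient
`(α_s⁻¹ z_x)_x` is again an element of the structure algebra `Z^J`. -/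
theorem structAlg_antiInvariant_divisible {B W : Type*} [Group W] {M : CoxeterMatrix B}
    (cs : CoxeterSystem M W) (J : Set B)
    (S : Type*) [CommRing S] [IsDomain S]
    (τ : W →* RingAut S) (α : W → S)
    (mrep : W → minReps cs J)
    (hmrep : ∀ w : W, ((mrep w : W))⁻¹ * w ∈ Subgroup.closure (cs.simple '' J))
    (i : B)
    (h2 : IsUnit (2 : S))
    (hτα : τ (cs.simple i) (α (cs.simple i)) = - α (cs.simple i))
    (hmod : ∀ p : S, τ (cs.simple i) p - p ∈ Ideal.span {α (cs.simple i)})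
    (hconj : ∀ t : W, cs.IsReflection t → ∃ u : Sˣ,
      τ (cs.simple i) (α t) = (u : S) * α (cs.simple i * t * (cs.simple i)⁻¹))
    (hprime : ∀ t : W, cs.IsReflection t → Prime (α t))
    (hlin : ∀ t : W, cs.IsReflection t → t ≠ cs.simple i →
      α (cs.simple i) ∉ Ideal.span {α t})
    (z : (minReps cs J) → S) (hz : z ∈ structAlg cs J S α)
    (hanti : sigmaInvol cs J S τ mrep i z = -z) :
    ∃ z' : (minReps cs J) → S,
      (∀ x : minReps cs J, z x = α (cs.simple i) * z' x) ∧
      z' ∈ structAlg cs J S α := by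
  classical
  have hrefl : cs.IsReflection (cs.simple i) := cs.isReflection_simple i
  have hαs0 : α (cs.simple i) ≠ 0 := (hprime _ hrefl).ne_zero
  have hanti' : ∀ x : minReps cs J,
      τ (cs.simple i) (z (mrep (cs.simple i * (x : W)))) = - z x := by
    intro x
    have := congrFun hanti x
    simpa [sigmaInvol] using this
  -- every component is divisible by α_s
  have hdvd : ∀ x : minReps cs J, α (cs.simple i) ∣ z x := by
    intro x
    set w := mrep (cs.simple i * (x : W)) with hw
    have hedge : (w : W)⁻¹ * (cs.simple i * (x : W))
        ∈ Subgroup.closure (cs.simple '' J) := hmrep _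
    have d1 : z x - z w ∈ Ideal.span {α (cs.simple i)} := hz (cs.simple i) hrefl x w hedge
    have d2 : τ (cs.simple i) (z w) - z w ∈ Ideal.span {α (cs.simple i)} := hmod (z w)
    rw [hanti' x] at d2
    have d3 : z x + z x ∈ Ideal.span {α (cs.simple i)} := by
      have hsub := Ideal.sub_mem _ d1 d2
      have : z x - z w - (- z x - z w) = z x + z x := by ring
      rwa [this] at hsub
    rw [Ideal.mem_span_singleton] at d3
    obtain ⟨c, hc⟩ := d3
    obtain ⟨u2, hu2⟩ := h2
    refine ⟨(↑u2⁻¹ : S) * c, ?_⟩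
    have h2z : (2 : S) * z x = α (cs.simple i) * c := by rw [← hc]; ring
    have : (↑u2⁻¹ : S) * ((2 : S) * z x) = (↑u2⁻¹ : S) * (α (cs.simple i) * c) := by
      rw [h2z]
    rw [← hu2, ← mul_assoc, Units.inv_mul, one_mul] at this
    rw [this]
    ring
  choose z' hz' using hdvd
  refine ⟨z', hz', ?_⟩
  intro t ht x y hedge
  have hxy : z x - z y ∈ Ideal.span {α t} := hz t ht x y hedge
  rw [Ideal.mem_span_singleton] at hxy ⊢
  by_cases hts : t = cs.simple i
  · subst hts
    set w := mrep (cs.simple i * (x : W)) with hw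
    have hyw : (y : W) = (w : W) := by
      apply noDescent_unique cs J y.property w.property
      have h1 : (y : W)⁻¹ * (cs.simple i * (x : W))
          ∈ Subgroup.closure (cs.simple '' J) := hedge
      have hh2 : (w : W)⁻¹ * (cs.simple i * (x : W))
          ∈ Subgroup.closure (cs.simple '' J) := hmrep _
      have heq : (y : W)⁻¹ * (w : W)
          = ((y : W)⁻¹ * (cs.simple i * (x : W)))
            * ((w : W)⁻¹ * (cs.simple i * (x : W)))⁻¹ := by group
      rw [heq]
      exact mul_mem h1 (inv_mem hh2)
    have hweq : w = y := Subtype.ext hyw.symm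
    have h1 : τ (cs.simple i) (z y) = - z x := by
      rw [← hweq]
      exact hanti' x
    rw [hz' y, map_mul, hτα] at h1
    -- h1 : -α_s * τ (z' y) = - z x
    have hzx : z x = α (cs.simple i) * τ (cs.simple i) (z' y) := by
      have := congrArg Neg.neg h1
      simpa using this.symm
    have hz'x : z' x = τ (cs.simple i) (z' y) :=
      mul_left_cancel₀ hαs0 (by rw [← hz' x, hzx])
    rw [hz'x]
    have hm := hmod (z' y)
    rwa [Ideal.mem_span_singleton] at hm
  · have hpt : Prime (α t) := hprime t ht
    have hnd : ¬ α t ∣ α (cs.simple i) := by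
      intro hc
      exact hlin t ht hts (Ideal.mem_span_singleton.mpr hc)
    have hd : α t ∣ α (cs.simple i) * (z' x - z' y) := by
      have heq : α (cs.simple i) * (z' x - z' y) = z x - z y := by
        rw [hz' x, hz' y]; ring
      rw [heq]
      exact hxy
    rcases (hpt.dvd_mul).mp hd with h | h
    · exact absurd h hnd
    · exact h
end

section
/- Let (W,S) be a Coxeter system with geometric representation V, J ⊆ S with W_J finite, and λ ∈ V with Stab_W(λ) = W_J. For λ ∈ V and x ∈ W^J set c(λ)^J_x = Σ_{w ∈ W_J} x w(λ). Then the tuple c(λ)^J = (c(λ)^J_x)_{x ∈ W^J} is an element of the structure algebra Z^J, and moreover it is invariant under the involution ₛσ for every s ∈ S. -/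
/-- let `V` be the geometric representation of `(W,S)` (abstracted as a
real representation `ρ` in which every reflection `t` moves every vector by a multiple
of its root `αV t`), `J ⊆ S` with `W_J` finite, and `lam ∈ V` with
`Stab_W(lam) = W_J`. Inside `S = Sym(V)` (abstracted as a commutative `ℝ`-algebra with
a `W`-equivariant linear map `ι : V → S`), the tuple
`c(λ)^J = (Σ_{w ∈ W_J} ι(xw · lam))_{x ∈ W^J}` lies in the structure algebra `Z^J` and
is invariant under the involution `ₛσ` for every simple reflection `s`. -/
theorem cLambda_mem_structAlg_and_invariant {B W : Type*} [Group W] {M : CoxeterMatrix B}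
    (cs : CoxeterSystem M W) (J : Set B)
    (V : Type*) [AddCommGroup V] [Module ℝ V]
    (ρ : W →* (V →ₗ[ℝ] V))
    (S : Type*) [CommRing S] [Algebra ℝ S]
    (ι : V →ₗ[ℝ] S)
    (τ : W →* RingAut S)
    (hcompat : ∀ (w : W) (v : V), τ w (ι v) = ι (ρ w v))
    (αV : W → V)
    (hroot : ∀ t : W, cs.IsReflection t → ∀ μ : V, ∃ c : ℝ, ρ t μ - μ = c • αV t)
    (lam : V)
    (hstab : ∀ w : W, w ∈ Subgroup.closure (cs.simple '' J) ↔ ρ w lam = lam)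
    (hfin : ((Subgroup.closure (cs.simple '' J) : Subgroup W) : Set W).Finite)
    (mrep : W → minReps cs J)
    (hmrep : ∀ w : W, ((mrep w : W))⁻¹ * w ∈ Subgroup.closure (cs.simple '' J)) :
    (fun x : minReps cs J => ι (∑ w ∈ hfin.toFinset, ρ ((x : W) * w) lam))
        ∈ structAlg cs J S (fun t => ι (αV t)) ∧
    ∀ i : B,
      sigmaInvol cs J S τ mrep i
          (fun x : minReps cs J => ι (∑ w ∈ hfin.toFinset, ρ ((x : W) * w) lam))
        = (fun x : minReps cs J => ι (∑ w ∈ hfin.toFinset, ρ ((x : W) * w) lam)) := by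
  have key : ∀ g g' : W, g⁻¹ * g' ∈ Subgroup.closure (cs.simple '' J) →
      ∑ w ∈ hfin.toFinset, ρ (g' * w) lam = ∑ w ∈ hfin.toFinset, ρ (g * w) lam := by
    intro g g' hu
    obtain ⟨u, huH, rfl⟩ : ∃ u ∈ Subgroup.closure (cs.simple '' J), g' = g * u :=
      ⟨g⁻¹ * g', hu, by group⟩
    refine Finset.sum_equiv (Equiv.mulLeft u) ?_ ?_
    · intro w
      simp only [hfin.mem_toFinset, Equiv.coe_mulLeft, SetLike.mem_coe]
      refine ⟨fun hw => Subgroup.mul_mem _ huH hw, fun hw => ?_⟩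
      have h2 := Subgroup.mul_mem _ (Subgroup.inv_mem _ huH) hw
      rwa [inv_mul_cancel_left] at h2
    · intro w _
      simp [mul_assoc]
  constructor
  · intro t ht x y hxy
    have hsum : ∑ w ∈ hfin.toFinset, ρ ((y : W) * w) lam
        = ρ t (∑ w ∈ hfin.toFinset, ρ ((x : W) * w) lam) := by
      rw [map_sum, ← key (y : W) (t * (x : W)) hxy]
      refine Finset.sum_congr rfl fun w _ => ?_
      rw [mul_assoc, map_mul ρ]
      rfl
    obtain ⟨c, hc⟩ := hroot t ht (∑ w ∈ hfin.toFinset, ρ ((x : W) * w) lam)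
    rw [Ideal.mem_span_singleton']
    refine ⟨algebraMap ℝ S (-c), ?_⟩
    show algebraMap ℝ S (-c) * ι (αV t)
        = ι (∑ w ∈ hfin.toFinset, ρ ((x : W) * w) lam)
          - ι (∑ w ∈ hfin.toFinset, ρ ((y : W) * w) lam)
    rw [hsum, ← Algebra.smul_def, ← map_smul, ← map_sub]
    congr 1
    rw [neg_smul, ← hc]
    abel
  · intro i
    funext x
    simp only [sigmaInvol, hcompat]
    congr 1
    have h1 := key ((mrep (cs.simple i * (x : W)) : W)) (cs.simple i * (x : W)) (hmrep _)
    rw [← h1, map_sum]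
    refine Finset.sum_congr rfl fun w _ => ?_
    rw [← Module.End.mul_apply, ← map_mul ρ, ← mul_assoc, ← mul_assoc,
      cs.simple_mul_simple_self, one_mul]
end

section
/- Let A be a commutative ring, B an A-algebra that is free of rank 2 as an A-module with basis {1, a}. Let 1*, a* ∈ Hom_A(B, A) be the dual basis. Then the A-module map B → Hom_A(B, A) sending 1 ↦ a* and a ↦ 1* is an isomorphism of A-modules; consequently, for any A-module M, Hom_A(B, M) ≅ B ⊗_A M as B-modules. -/
open TensorProduct

section AuxDefs

variable {A : Type*} [CommRing A] {B : Type*} [CommRing B] [Algebra A B]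

/-- Auxiliary map `B ⊗ M → Hom(B, M)` built from a linear form `L : B → A`:
`x ⊗ m ↦ (y ↦ L (x * y) • m)`. -/
noncomputable def phiAux (L : B →ₗ[A] A) (M : Type*) [AddCommGroup M] [Module A M] :
    B ⊗[A] M →ₗ[A] (B →ₗ[A] M) :=
  TensorProduct.lift (LinearMap.mk₂ A
    (fun x m => ((L ∘ₗ LinearMap.mul A B x).smulRight m))
    (by intro x x' m; ext y; simp [add_mul, add_smul])
    (by
      intro c x m; ext y
      simp only [LinearMap.smul_apply, LinearMap.smulRight_apply, LinearMap.comp_apply,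
        LinearMap.mul_apply', smul_mul_assoc, map_smul, smul_eq_mul, mul_smul])
    (by intro x m m'; ext y; simp [smul_add])
    (by
      intro c x m; ext y
      simp only [LinearMap.smul_apply, LinearMap.smulRight_apply]
      rw [smul_comm]))

@[simp] lemma phiAux_tmul (L : B →ₗ[A] A) (M : Type*) [AddCommGroup M] [Module A M]
    (x : B) (m : M) (y : B) : phiAux L M (x ⊗ₜ m) y = L (x * y) • m := by
  simp only [phiAux, TensorProduct.lift.tmul, LinearMap.mk₂_apply,
    LinearMap.smulRight_apply, LinearMap.comp_apply, LinearMap.mul_apply']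

end AuxDefs

/-- if `B` is an `A`-algebra free of rank 2 as an `A`-module with basis
`{1, a}`, then the `A`-linear map `B → Hom_A(B,A)` sending `1 ↦ a*` and `a ↦ 1*`
(the dual basis) is an isomorphism of `A`-modules; consequently, for every `A`-module
`M`, `Hom_A(B, M) ≅ B ⊗_A M` as `B`-modules (the `B`-action on `Hom_A(B,M)` being
precomposition with multiplication). -/
theorem free_rank_two_selfdual {A : Type*} [CommRing A]
    {B : Type*} [CommRing B] [Algebra A B]
    (b : Module.Basis (Fin 2) A B) (hb0 : b 0 = 1) :
    Function.Bijective ⇑(b.constr A ![b.coord 1, b.coord 0]) ∧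
    ∀ (M : Type*) [AddCommGroup M] [Module A M],
      ∃ e : (B →ₗ[A] M) ≃ₗ[A] (B ⊗[A] M),
        ∀ (c : B) (f : B →ₗ[A] M),
          e (f ∘ₗ (LinearMap.mul A B c)) = c • e f := by
  constructor
  · -- first part: the dual-basis swap map is bijective
    let D : B →ₗ[A] (B →ₗ[A] A) := b.constr A ![b.coord 1, b.coord 0]
    let D' : (B →ₗ[A] A) →ₗ[A] B := (b.dualBasis).constr A ![b 1, b 0]
    have h1 : D ∘ₗ D' = LinearMap.id := by
      apply (b.dualBasis).ext
      intro i
      fin_cases i <;>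
        simp only [D, D', LinearMap.comp_apply, Module.Basis.constr_basis, LinearMap.id_apply,
          Matrix.cons_val_zero, Matrix.cons_val_one, Matrix.head_cons, ← Module.Basis.coe_dualBasis,
          Fin.mk_one, Fin.zero_eta]
    have h2 : D' ∘ₗ D = LinearMap.id := by
      apply b.ext
      intro i
      fin_cases i <;>
        simp only [D, D', LinearMap.comp_apply, Module.Basis.constr_basis, LinearMap.id_apply,
          Matrix.cons_val_zero, Matrix.cons_val_one, Matrix.head_cons, ← Module.Basis.coe_dualBasis,
          Fin.mk_one, Fin.zero_eta]
    refine Function.bijective_iff_has_inverse.mpr ⟨D', ?_, ?_⟩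
    · intro x; exact LinearMap.congr_fun h2 x
    · intro f; exact LinearMap.congr_fun h1 f
  · -- second part: `Hom_A(B, M) ≅ B ⊗_A M` as `B`-modules
    intro M _ _
    set L : B →ₗ[A] A := b.coord 1 with hL
    set c1 : A := L (b 1 * b 1) with hc1
    set w : B := b 1 - c1 • (1 : B) with hw
    have hL1 : L (1 : B) = 0 := by rw [← hb0]; simp [hL]
    have hLb1 : L (b 1) = 1 := by simp [hL]
    have hxw : ∀ x : B, L (x * w) = b.repr x 0 := by
      intro x
      have hx : x = b.repr x 0 • (1 : B) + b.repr x 1 • b 1 := by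
        conv_lhs => rw [← b.sum_repr x]
        rw [Fin.sum_univ_two, hb0]
      conv_lhs => rw [hx]
      have : (b.repr x 0 • (1:B) + b.repr x 1 • b 1) * w
          = b.repr x 0 • w + b.repr x 1 • (b 1 * w) := by
        rw [add_mul, smul_mul_assoc, smul_mul_assoc, one_mul]
      rw [this, map_add, map_smul, map_smul]
      have h1 : L w = 1 := by
        rw [hw, map_sub, map_smul, hLb1, hL1, smul_zero, sub_zero]
      have h2 : L (b 1 * w) = 0 := by
        rw [hw, mul_sub, map_sub, mul_smul_comm, mul_one, map_smul, hLb1, smul_eq_mul,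
          mul_one, ← hc1, sub_self]
      rw [h1, h2, smul_eq_mul, mul_one, smul_eq_mul, mul_zero, add_zero]
    have hx1 : ∀ x : B, L (x * 1) = b.repr x 1 := by
      intro x; rw [mul_one]; simp [hL]
    set φ := phiAux L M with hφ
    set ψ : (B →ₗ[A] M) →ₗ[A] B ⊗[A] M :=
      { toFun := fun f => (1 : B) ⊗ₜ[A] f w + (b 1) ⊗ₜ[A] f 1
        map_add' := fun f g => by simp only [LinearMap.add_apply, tmul_add]; abel
        map_smul' := fun c f => by
          simp only [LinearMap.smul_apply, tmul_smul, RingHom.id_apply, smul_add] } with hψ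
    have hψφ : ∀ t : B ⊗[A] M, ψ (φ t) = t := by
      intro t
      induction t with
      | zero => simp
      | tmul x m =>
        have : ψ (φ (x ⊗ₜ[A] m))
            = (1 : B) ⊗ₜ[A] (L (x * w) • m) + (b 1) ⊗ₜ[A] (L (x * 1) • m) := by
          simp [hψ, hφ]
        rw [this, hxw, hx1, tmul_smul, tmul_smul, smul_tmul', smul_tmul', ← add_tmul]
        congr 1
        conv_rhs => rw [← b.sum_repr x]
        rw [Fin.sum_univ_two, hb0]
      | add t1 t2 h1 h2 => rw [map_add, map_add, h1, h2]
    have hφψ : ∀ f : B →ₗ[A] M, φ (ψ f) = f := by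
      intro f
      apply b.ext
      intro i
      have hψf : φ (ψ f) = phiAux L M ((1:B) ⊗ₜ[A] f w) + phiAux L M ((b 1) ⊗ₜ[A] f 1) := by
        simp [hψ, hφ]
      fin_cases i
      · rw [hψf]
        simp only [LinearMap.add_apply, phiAux_tmul, Fin.zero_eta, hb0]
        rw [one_mul, hL1, zero_smul, zero_add, mul_one, hLb1, one_smul]
      · rw [hψf]
        simp only [LinearMap.add_apply, phiAux_tmul, Fin.mk_one]
        rw [one_mul, hLb1, one_smul, ← hc1]
        have : f w = f (b 1) - c1 • f 1 := by rw [hw, map_sub, map_smul]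
        rw [this, sub_add_cancel]
    have hkey : ∀ (c : B) (t : B ⊗[A] M), φ (c • t) = (φ t) ∘ₗ LinearMap.mul A B c := by
      intro c t
      induction t with
      | zero => simp
      | tmul x m =>
        ext y
        rw [smul_tmul']
        simp only [hφ, phiAux_tmul, LinearMap.comp_apply, LinearMap.mul_apply', smul_eq_mul]
        ring_nf
      | add t1 t2 h1 h2 =>
        rw [smul_add, map_add, map_add, h1, h2, LinearMap.add_comp]
    refine ⟨{ toFun := ψ, map_add' := map_add ψ, map_smul' := map_smul ψ,
              invFun := φ, left_inv := hφψ, right_inv := hψφ }, ?_⟩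
    intro c f
    have : φ (ψ (f ∘ₗ LinearMap.mul A B c)) = φ (c • ψ f) := by
      rw [hφψ, hkey, hφψ]
    have hinj : Function.Injective φ := Function.LeftInverse.injective hψφ
    exact hinj this
end
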